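/- arXiv:1312.0825 — 8 statements merged into one kernel-verified Lean document; each statement's English description precedes it below -/
import Mathlib

section
/- For every integer R ≥ 2, the density of coprime tuples converges: lim_{M→∞} |C(M,R)| / M^R = 1/ζ(R). -/
/-!
Möbius inversion over the gcd gives `|C(M,R)| = ∑_{d ≤ M} μ(d) ⌊M/d⌋^R`. After division by
`M^R` the `d`-th term tends to `μ(d)/d^R` and is bounded by `1/d^R`, which is summable for
`R ≥ 2`; by dominated convergence (Tannery's theorem) the density tends to
`∑ μ(d)/d^R = 1/ζ(R)`, the Dirichlet series of `μ` being the inverse of that of `1`.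
-/

/-- `coprimeTuples M R` is the set `C(M,R)` of `R`-tuples `(c₁,…,c_R)` of integers
with `1 ≤ cᵣ ≤ M` for every `r` and `gcd(c₁,…,c_R) = 1`. -/
def coprimeTuples (M R : ℕ) : Finset (Fin R → ℕ) :=
  (Fintype.piFinset fun _ : Fin R => Finset.Icc 1 M).filter
    fun c => Finset.univ.gcd c = 1

/-- `ζ(R) = ∑_{n=1}^∞ n^{-R}`. -/
noncomputable def zetaVal (R : ℕ) : ℝ := ∑' n : ℕ, 1 / ((n : ℝ) + 1) ^ R

open Finset Filter ArithmeticFunction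
open scoped ArithmeticFunction.Moebius Topology

lemma sum_moebius_divisors {A : Type*} [Ring A] (n : ℕ) :
    ∑ d ∈ n.divisors, (μ d : A) = if n = 1 then 1 else 0 := by
  simpa only [coe_mul_zeta_apply, intCoe_apply, one_apply] using
    congr($(coe_moebius_mul_coe_zeta (R := A)) n)

lemma filter_dvd_Icc_eq_divisors {n M : ℕ} (hn : n ≠ 0) (hnM : n ≤ M) :
    {d ∈ Icc 1 M | d ∣ n} = n.divisors := by
  ext d
  simp only [mem_filter, mem_Icc, Nat.mem_divisors]
  constructor
  · rintro ⟨-, hd⟩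
    exact ⟨hd, hn⟩
  · rintro ⟨hd, -⟩
    exact ⟨⟨Nat.pos_of_dvd_of_pos hd (by omega), (Nat.le_of_dvd (by omega) hd).trans hnM⟩, hd⟩

section Tuples

variable {ι : Type*} [Fintype ι] [DecidableEq ι]

lemma card_filter_dvd_gcd_piFinset_Icc (M d : ℕ) :
    #{c ∈ Fintype.piFinset (fun _ : ι => Icc 1 M) | d ∣ univ.gcd c} =
      (M / d) ^ Fintype.card ι := by
  have : {c ∈ Fintype.piFinset (fun _ : ι => Icc 1 M) | d ∣ univ.gcd c} =
      Fintype.piFinset fun _ : ι => {x ∈ Icc 1 M | d ∣ x} := by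
    ext c
    simp [Finset.dvd_gcd_iff, forall_and]
  rw [this, Fintype.card_piFinset, prod_const, card_univ]
  exact congr($(Nat.Ioc_filter_dvd_card_eq_div M d) ^ _)

lemma card_filter_gcd_eq_one_piFinset_Icc {A : Type*} [CommRing A] [Nonempty ι] (M : ℕ) :
    (#{c ∈ Fintype.piFinset (fun _ : ι => Icc 1 M) | univ.gcd c = 1} : A) =
      ∑ d ∈ Icc 1 M, (μ d : A) * ((M / d : ℕ) : A) ^ Fintype.card ι := by
  have hindicator : ∀ c ∈ Fintype.piFinset (fun _ : ι => Icc 1 M),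
      (if univ.gcd c = 1 then 1 else 0 : A) = ∑ d ∈ Icc 1 M with d ∣ univ.gcd c, (μ d : A) := by
    intro c hc
    obtain ⟨i⟩ := ‹Nonempty ι›
    have hci := mem_Icc.1 (Fintype.mem_piFinset.1 hc i)
    have hdvd : univ.gcd c ∣ c i := gcd_dvd (mem_univ i)
    rw [filter_dvd_Icc_eq_divisors, sum_moebius_divisors]
    · exact (Nat.pos_of_dvd_of_pos hdvd (by omega)).ne'
    · exact (Nat.le_of_dvd (by omega) hdvd).trans hci.2
  rw [card_filter, Nat.cast_sum, sum_congr rfl fun c hc => by push_cast; exact hindicator c hc]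
  simp_rw [sum_filter]
  rw [sum_comm]
  refine sum_congr rfl fun d _ => ?_
  rw [← sum_filter, sum_const, card_filter_dvd_gcd_piFinset_Icc, nsmul_eq_mul, mul_comm,
    Nat.cast_pow]

end Tuples

lemma natCast_div_div_le_one_div (M d : ℕ) : ((M / d : ℕ) : ℝ) / M ≤ 1 / d := by
  rcases eq_or_ne M 0 with rfl | hM
  · simp
  calc ((M / d : ℕ) : ℝ) / M ≤ ((M : ℝ) / d) / M := by gcongr; exact Nat.cast_div_le
    _ = 1 / d := by field_simp

lemma tendsto_natCast_div_div_atTop (d : ℕ) :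
    Tendsto (fun M : ℕ => ((M / d : ℕ) : ℝ) / M) atTop (𝓝 (1 / d)) := by
  rcases eq_or_ne d 0 with rfl | hd
  · simp
  have hx : Tendsto (fun M : ℕ => (M : ℝ) / d) atTop atTop :=
    tendsto_natCast_atTop_atTop.atTop_div_const (by positivity)
  have := (tendsto_nat_floor_div_atTop.comp hx).mul_const (1 / (d : ℝ))
  rw [one_mul] at this
  refine this.congr' ?_
  filter_upwards [eventually_ne_atTop 0] with M hM
  simp only [Function.comp_apply, Nat.floor_div_eq_div]
  field_simp

lemma ofReal_zetaVal {R : ℕ} (hR : 2 ≤ R) : (zetaVal R : ℂ) = riemannZeta R := by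
  rw [zeta_eq_tsum_one_div_nat_add_one_cpow
    (by rw [Complex.natCast_re]; exact_mod_cast hR), zetaVal, Complex.ofReal_tsum]
  push_cast [Complex.cpow_natCast]
  rfl

lemma tsum_moebius_div_pow {R : ℕ} (hR : 2 ≤ R) :
    ∑' n : ℕ, (μ n : ℝ) / n ^ R = 1 / zetaVal R := by
  have hs : 1 < (R : ℂ).re := by rw [Complex.natCast_re]; exact_mod_cast hR
  have h := LSeries_one_mul_Lseries_moebius hs
  rw [LSeries_one_eq_riemannZeta hs, ← ofReal_zetaVal hR, LSeries] at h
  simp_rw [LSeries.term_of_ne_zero' (s := (R : ℂ)) (by exact_mod_cast (by omega : R ≠ 0)), Complex.cpow_natCast] at h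
  have h' : ((zetaVal R * ∑' n : ℕ, (μ n : ℝ) / n ^ R : ℝ) : ℂ) = 1 := by
    push_cast [Complex.ofReal_tsum]
    exact h
  exact eq_one_div_of_mul_eq_one_right (by exact_mod_cast h')

lemma card_coprimeTuples_div_pow {R : ℕ} (hR : R ≠ 0) (M : ℕ) :
    ((coprimeTuples M R).card : ℝ) / (M : ℝ) ^ R =
      ∑' d : ℕ, (μ d : ℝ) * (((M / d : ℕ) : ℝ) / M) ^ R := by
  have : Nonempty (Fin R) := Fin.pos_iff_nonempty.1 (Nat.pos_of_ne_zero hR)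
  rw [coprimeTuples, card_filter_gcd_eq_one_piFinset_Icc, Fintype.card_fin, sum_div,
    tsum_eq_sum (s := Icc 1 M)]
  · exact sum_congr rfl fun d _ => by rw [mul_div_assoc, div_pow]
  · intro d hd
    rcases Nat.eq_zero_or_pos d with rfl | hd0
    · simp
    have : M / d = 0 := Nat.div_eq_of_lt (by rw [mem_Icc] at hd; omega)
    simp [this, hR]

/-- For every integer `R ≥ 2`, `lim_{M→∞} |C(M,R)| / M^R = 1/ζ(R)`. -/
theorem coprimeTuples_density (R : ℕ) (hR : 2 ≤ R) :
    Filter.Tendsto (fun M : ℕ => ((coprimeTuples M R).card : ℝ) / (M : ℝ) ^ R)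
      Filter.atTop (nhds (1 / zetaVal R)) := by
  simp_rw [card_coprimeTuples_div_pow (by omega : R ≠ 0), ← tsum_moebius_div_pow hR]
  refine tendsto_tsum_of_dominated_convergence (bound := fun d : ℕ => 1 / (d : ℝ) ^ R)
    (Real.summable_one_div_nat_pow.2 hR) (fun d => ?_) (Eventually.of_forall fun M d => ?_)
  · have := ((tendsto_natCast_div_div_atTop d).pow R).const_mul (μ d : ℝ)
    rwa [one_div_pow, ← div_eq_mul_one_div] at this
  · have hμ : |(μ d : ℝ)| ≤ 1 := by exact_mod_cast abs_moebius_le_one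
    rw [norm_mul, norm_pow, Real.norm_eq_abs, Real.norm_of_nonneg (by positivity), ← one_div_pow,
      ← one_mul ((1 / (d : ℝ)) ^ R)]
    exact mul_le_mul hμ (pow_le_pow_left₀ (by positivity) (natCast_div_div_le_one_div M d) R)
      (by positivity) zero_le_one
end

section
/- Let n, μ ∈ ℕ, let a : Fin μ → Fin n → ℝ be a weight matrix, and let S ⊆ Fin n. Suppose that for every nonempty subset S' ⊆ S there exists a right node i ∈ Fin μ that is an S'-leaf, i.e., exactly one j ∈ S' satisfies a i j ≠ 0. Then for every x : Fin n → ℝ with x j = 0 for all j ∉ S, if ∑_{j} (a i j) · (x j) = 0 for every i ∈ Fin μ, then x = 0. -/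
/-- A right node `i` is an `S'`-leaf for the weight matrix `a` if exactly one
`j ∈ S'` satisfies `a i j ≠ 0`. -/
def IsLeaf {n μ : ℕ} (a : Fin μ → Fin n → ℝ) (S' : Finset (Fin n)) (i : Fin μ) : Prop :=
  ∃! j : Fin n, j ∈ S' ∧ a i j ≠ 0

/-- If every nonempty subset `S' ⊆ S` has an `S'`-leaf right node, then the only
vector supported on `S` whose every measurement `∑_j (a i j)·(x j)` vanishes is the
zero vector. -/
theorem zero_of_all_measurements_zero (n μ : ℕ) (a : Fin μ → Fin n → ℝ)
    (S : Finset (Fin n))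
    (hleaf : ∀ S' ⊆ S, S'.Nonempty → ∃ i : Fin μ, IsLeaf a S' i)
    (x : Fin n → ℝ) (hx : ∀ j ∉ S, x j = 0)
    (hmeas : ∀ i : Fin μ, ∑ j, a i j * x j = 0) :
    x = 0 := by
  by_contra hne
  obtain ⟨j₀, hj₀⟩ : ∃ j, x j ≠ 0 := by
    by_contra h
    push_neg at h
    exact hne (funext fun j => h j)
  set T : Finset (Fin n) := S.filter (fun j => x j ≠ 0) with hT
  have hTsub : T ⊆ S := Finset.filter_subset _ _
  have hTne : T.Nonempty := by
    refine ⟨j₀, Finset.mem_filter.2 ⟨?_, hj₀⟩⟩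
    by_contra h
    exact hj₀ (hx j₀ h)
  obtain ⟨i, j, ⟨hjT, hja⟩, huniq⟩ := hleaf T hTsub hTne
  have hsum : ∑ k, a i k * x k = a i j * x j := by
    refine Finset.sum_eq_single j (fun k _ hk => ?_) (fun h => absurd (Finset.mem_univ j) h)
    by_cases hxk : x k = 0
    · simp [hxk]
    · have hkT : k ∈ T := Finset.mem_filter.2 ⟨by by_contra h; exact hxk (hx k h), hxk⟩
      by_cases hak : a i k = 0
      · simp [hak]
      · exact absurd (huniq k ⟨hkT, hak⟩) hk
  have hxj : x j ≠ 0 := (Finset.mem_filter.1 hjT).2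
  have := hmeas i
  rw [hsum] at this
  exact (mul_ne_zero hja hxj) this
end

section
/- Let n, μ ∈ ℕ, let a : Fin μ → Fin n → ℝ be a weight matrix, and let S ⊆ Fin n be a finite nonempty set of size t. Suppose that for every nonempty subset S' ⊆ S there exists a right node i ∈ Fin μ that is an S'-leaf. Then there exist an enumeration j₁, …, j_t of S and right nodes i₁, …, i_t ∈ Fin μ such that for every m ∈ {1,…,t}, a (i_m) (j_m) ≠ 0 and a (i_m) j = 0 for every j ∈ {j_m, j_{m+1}, …, j_t} with j ≠ j_m. (That is, the peeling decoder can process the elements of S one at a time.) -/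
/-- If every nonempty subset `S' ⊆ S` has an `S'`-leaf, then the peeling decoder can
process the elements of `S` one at a time: there is an enumeration `j₁,…,j_t` of `S`
and right nodes `i₁,…,i_t` such that for every `m`, `a (i_m) (j_m) ≠ 0` while
`a (i_m) j = 0` for every later element `j ∈ {j_m,…,j_t}` with `j ≠ j_m`. -/
theorem peeling_order_exists (n μ t : ℕ) (a : Fin μ → Fin n → ℝ)
    (S : Finset (Fin n)) (hS : S.Nonempty) (hcard : S.card = t)
    (hleaf : ∀ S' ⊆ S, S'.Nonempty → ∃ i : Fin μ, IsLeaf a S' i) :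
    ∃ (j : Fin t → Fin n) (i : Fin t → Fin μ),
      Function.Injective j ∧ (∀ m : Fin t, j m ∈ S) ∧ (∀ x ∈ S, ∃ m : Fin t, j m = x) ∧
      ∀ m : Fin t, a (i m) (j m) ≠ 0 ∧
        ∀ m' : Fin t, m ≤ m' → m' ≠ m → a (i m) (j m') = 0 := by
  clear hS
  induction t generalizing S with
  | zero =>
    refine ⟨Fin.elim0, Fin.elim0, fun m => m.elim0, fun m => m.elim0, ?_, fun m => m.elim0⟩
    intro x hx
    rw [Finset.card_eq_zero.mp hcard] at hx
    exact absurd hx (Finset.notMem_empty x)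
  | succ t ih =>
    have hSne : S.Nonempty := Finset.card_pos.mp (by omega)
    obtain ⟨i0, j0, ⟨hj0S, hj0ne⟩, huniq⟩ := hleaf S Finset.Subset.rfl hSne
    set S' := S.erase j0 with hS'
    have hcard' : S'.card = t := by
      rw [hS', Finset.card_erase_of_mem hj0S, hcard]; omega
    have hsub : S' ⊆ S := Finset.erase_subset _ _
    obtain ⟨J, I, hinj, hmem, hsurj, hcond⟩ :=
      ih S' hcard' (fun T hT hTne => hleaf T (hT.trans hsub) hTne)
    refine ⟨Fin.cons j0 J, Fin.cons i0 I, ?_, ?_, ?_, ?_⟩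
    · -- injective
      intro m m' h
      induction m using Fin.cases with
      | zero =>
        induction m' using Fin.cases with
        | zero => rfl
        | succ k =>
          simp only [Fin.cons_zero, Fin.cons_succ] at h
          exact absurd h.symm (Finset.ne_of_mem_erase (hmem k))
      | succ k =>
        induction m' using Fin.cases with
        | zero =>
          simp only [Fin.cons_zero, Fin.cons_succ] at h
          exact absurd h (Finset.ne_of_mem_erase (hmem k))
        | succ k' =>
          simp only [Fin.cons_succ] at h
          rw [hinj h]
    · -- membership
      intro m
      induction m using Fin.cases with
      | zero => simpa using hj0S
      | succ k => simpa using hsub (hmem k)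
    · -- surjectivity
      intro x hx
      by_cases hxj : x = j0
      · exact ⟨0, by simp [hxj]⟩
      · obtain ⟨m, hm⟩ := hsurj x (Finset.mem_erase.mpr ⟨hxj, hx⟩)
        exact ⟨m.succ, by simpa using hm⟩
    · -- main condition
      intro m
      induction m using Fin.cases with
      | zero =>
        refine ⟨by simpa using hj0ne, ?_⟩
        intro m' _ hne
        induction m' using Fin.cases with
        | zero => exact absurd rfl hne
        | succ k =>
          simp only [Fin.cons_zero, Fin.cons_succ]
          by_contra hnz
          exact Finset.ne_of_mem_erase (hmem k) (huniq _ ⟨hsub (hmem k), hnz⟩)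
      | succ k =>
        refine ⟨by simpa using (hcond k).1, ?_⟩
        intro m' hle hne
        induction m' using Fin.cases with
        | zero => exact absurd (Fin.le_zero_iff.mp hle) (Fin.succ_ne_zero k)
        | succ k' =>
          simp only [Fin.cons_succ]
          exact (hcond k).2 k' (Fin.succ_le_succ_iff.mp hle)
            (fun h => hne (by rw [h]))
end

section
/- Let G be a connected simple graph on a finite vertex type V such that every two vertices of G are joined by a path of length at most D. Let F be a nonempty finite set of edges of G with |F| = s. Then there exist vertices u, v and a walk W from u to v in G such that every edge e ∈ F appears in the edge list of W, and the length of W is at most s·(D + 1). -/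
/-- In a connected graph of diameter at most `D`, any nonempty set `F` of `s` edges
can be covered by a single walk of length at most `s·(D+1)`. -/
theorem walk_covering_edges {V : Type*} [Fintype V] [DecidableEq V]
    (G : SimpleGraph V) (hconn : G.Connected) (D : ℕ)
    (hdiam : ∀ u v : V, ∃ p : G.Walk u v, p.IsPath ∧ p.length ≤ D)
    (F : Finset (Sym2 V)) (hF : F.Nonempty) (hFE : ∀ e ∈ F, e ∈ G.edgeSet)
    (s : ℕ) (hs : F.card = s) :
    ∃ (u v : V) (W : G.Walk u v),
      (∀ e ∈ F, e ∈ W.edges) ∧ W.length ≤ s * (D + 1) := by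
  subst hs
  induction F using Finset.induction_on with
  | empty => exact absurd hF (by simp)
  | @insert e F he IH =>
    induction e using Sym2.inductionOn with
    | hf a b =>
      have hab : G.Adj a b := hFE _ (Finset.mem_insert_self _ _)
      rcases F.eq_empty_or_nonempty with rfl | hF'
      · refine ⟨a, b, SimpleGraph.Walk.cons hab SimpleGraph.Walk.nil, ?_, ?_⟩
        · intro f hf
          simp only [Finset.mem_insert, Finset.notMem_empty, or_false] at hf
          simp [hf]
        · simp
      · obtain ⟨u, v, W, hW, hlen⟩ := IH hF' (fun f hf => hFE f (Finset.mem_insert_of_mem hf))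
        obtain ⟨p, _, hp⟩ := hdiam v a
        refine ⟨u, b, W.append (p.append (SimpleGraph.Walk.cons hab SimpleGraph.Walk.nil)), ?_, ?_⟩
        · intro f hf
          simp only [Finset.mem_insert] at hf
          rcases hf with rfl | hf
          · simp [SimpleGraph.Walk.edges_append]
          · simp [SimpleGraph.Walk.edges_append, hW f hf]
        · simp only [SimpleGraph.Walk.length_append, SimpleGraph.Walk.length_cons,
            SimpleGraph.Walk.length_nil]
          rw [Finset.card_insert_of_notMem he]
          nlinarith
end

section
/- Let G be a simple graph on a vertex type V, let P be a walk from u to v in G, and let w : Sym2 V → ℕ be finitely supported with w e = 0 for every e not appearing in the edge list of P. Then there exists a walk Q from u to v in G such that for every edge e, the number of occurrences of e in the edge list of Q equals the number of occurrences of e in the edge list of P plus 2·(w e), and the length of Q equals the length of P plus 2·∑_e (w e). (The walk Q is obtained from P by inserting w e back-and-forth local loops over each edge e.) -/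
/-!
Each back-and-forth traversal `x → y → x` of an edge `s(x, y)` already on the walk can be
spliced in at `x`; it adds two copies of that edge and nothing else. Splicing in `w e` such
detours for every edge `e`, the edge multiset of the walk grows by exactly `2 • w`.
-/

namespace SimpleGraph.Walk

variable {V : Type*} {G : SimpleGraph V}

theorem exists_coe_edges_eq_cons_cons {u v : V} (P : G.Walk u v) {e : Sym2 V}
    (he : e ∈ P.edges) :
    ∃ Q : G.Walk u v, (Q.edges : Multiset (Sym2 V)) = e ::ₘ e ::ₘ P.edges := by
  induction P with
  | nil => simp at he
  | @cons a b _ h p ih =>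
    rcases List.mem_cons.mp he with rfl | he
    · refine ⟨.cons h (.cons h.symm (.cons h p)), ?_⟩
      simp [Sym2.eq_swap]
    · obtain ⟨Q, hQ⟩ := ih he
      refine ⟨.cons h Q, ?_⟩
      simp only [edges_cons, ← Multiset.cons_coe, hQ, Multiset.cons_swap s(a, b)]

theorem exists_coe_edges_eq_add_two_nsmul {u v : V} (P : G.Walk u v) (m : Multiset (Sym2 V))
    (hm : ∀ e ∈ m, e ∈ P.edges) :
    ∃ Q : G.Walk u v, (Q.edges : Multiset (Sym2 V)) = P.edges + 2 • m := by
  induction m using Multiset.induction with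
  | empty => exact ⟨P, by simp⟩
  | cons e m ih =>
    obtain ⟨Q, hQ⟩ := ih fun f hf => hm f (Multiset.mem_cons_of_mem hf)
    have heQ : e ∈ Q.edges := by
      rw [← Multiset.mem_coe, hQ]
      exact Multiset.mem_add.mpr (.inl (hm e (Multiset.mem_cons_self e m)))
    obtain ⟨Q', hQ'⟩ := Q.exists_coe_edges_eq_cons_cons heQ
    refine ⟨Q', ?_⟩
    simp only [hQ', hQ, two_nsmul, Multiset.add_cons, Multiset.cons_add]

end SimpleGraph.Walk

/-- Given a walk `P` from `u` to `v` and integer weights `w` supported on edges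
appearing in `P`, there is a walk `Q` from `u` to `v` (obtained by inserting
`w e` back-and-forth local loops over each edge `e`) that traverses every edge
`e` exactly `2·(w e)` more times than `P` does, with
`length(Q) = length(P) + 2·∑_e (w e)`. -/
theorem exists_weighted_walk {V : Type*} [DecidableEq V] (G : SimpleGraph V)
    {u v : V} (P : G.Walk u v) (w : Sym2 V →₀ ℕ)
    (hw : ∀ e, e ∉ P.edges → w e = 0) :
    ∃ Q : G.Walk u v,
      (∀ e, Q.edges.count e = P.edges.count e + 2 * w e) ∧
      Q.length = P.length + 2 * ∑ e ∈ w.support, w e := by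
  have hsupp : ∀ e ∈ w.toMultiset, e ∈ P.edges := fun e he => by
    by_contra hne
    simp [Finsupp.mem_toMultiset, hw e hne] at he
  obtain ⟨Q, hQ⟩ := P.exists_coe_edges_eq_add_two_nsmul w.toMultiset hsupp
  refine ⟨Q, fun e => ?_, ?_⟩
  · simpa [Finsupp.count_toMultiset] using congrArg (Multiset.count e) hQ
  · simpa [← SimpleGraph.Walk.length_edges, Finsupp.card_toMultiset, Finsupp.sum]
      using congrArg Multiset.card hQ
end

section
/- Let G be a connected simple graph on a finite vertex type V such that every two vertices of G are joined by a path of length at most D, let d : Sym2 V → ℝ assign a delay to each edge, let M ∈ ℕ, and let w : Sym2 V → ℕ be supported on a nonempty set of s edges of G with w e ≤ M for every e. Then there exist vertices u, v and walks P and Q, both from u to v in G, such that ∑_{e ∈ edges(Q)} d e − ∑_{e ∈ edges(P)} d e = 2·∑_{e} (w e)·(d e), the length of P is at most s·(D + 1), and the length of Q is at most s·(D + 1) + 2·M·s. (Thus any integer-weighted delay measurement with weights at most M supported on s edges can be realized as half the difference of two end-to-end path delay measurements.) -/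
/-!
Traverse the support edges `e₁, …, eₛ` one after another, reaching each from the previous one
by a path of length at most `D`; this spanning walk `P` has length at most `s (D + 1)`.
The walk `Q` is `P` with a detour inserted at the start of each `eᵢ`: go back and forth along
`eᵢ` exactly `w eᵢ` times. Each detour adds `2 w(eᵢ) d(eᵢ)` to the delay and `2 w(eᵢ) ≤ 2 M`
to the length.
-/

open SimpleGraph Finset

namespace SimpleGraph

variable {V : Type*} {G : SimpleGraph V}

def Adj.backAndForth {a b : V} (h : G.Adj a b) : ℕ → G.Walk a a
  | 0 => Walk.nil
  | n + 1 => Walk.cons h (Walk.cons h.symm (h.backAndForth n))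

theorem Adj.edges_backAndForth {a b : V} (h : G.Adj a b) (n : ℕ) :
    (h.backAndForth n).edges = List.replicate (2 * n) s(a, b) := by
  induction n with
  | zero => rfl
  | succ n ih =>
    rw [backAndForth, Walk.edges_cons, Walk.edges_cons, ih, Sym2.eq_swap,
      show 2 * (n + 1) = 2 * n + 1 + 1 by ring, List.replicate_succ, List.replicate_succ]

theorem Adj.length_backAndForth {a b : V} (h : G.Adj a b) (n : ℕ) :
    (h.backAndForth n).length = 2 * n := by
  rw [← Walk.length_edges, edges_backAndForth, List.length_replicate]

theorem Adj.sum_map_edges_backAndForth {a b : V} (h : G.Adj a b) (d : Sym2 V → ℝ) (n : ℕ) :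
    ((h.backAndForth n).edges.map d).sum = 2 * n * d s(a, b) := by
  rw [edges_backAndForth, List.map_replicate, List.sum_replicate, nsmul_eq_mul]
  push_cast
  ring

theorem exists_walks_sum_edges_sub_eq_two_mul_sum {D : ℕ}
    (hdiam : ∀ u v : V, ∃ p : G.Walk u v, p.length ≤ D) (d : Sym2 V → ℝ) (w : Sym2 V → ℕ)
    (S : Finset (Sym2 V)) (hS : ↑S ⊆ G.edgeSet) (v : V) :
    ∃ (u : V) (P Q : G.Walk u v),
      (Q.edges.map d).sum - (P.edges.map d).sum = 2 * ∑ e ∈ S, (w e : ℝ) * d e ∧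
      P.length ≤ #S * (D + 1) ∧
      Q.length = P.length + 2 * ∑ e ∈ S, w e := by
  classical
  induction S using Finset.induction_on with
  | empty => exact ⟨v, .nil, .nil, by simp⟩
  | insert e S heS ih =>
    obtain ⟨u, P, Q, hdelay, hP, hQ⟩ := ih (subset_trans (by simp) hS)
    induction e using Sym2.inductionOn with
    | hf a b =>
      have hab : G.Adj a b := hS (mem_insert_self _ S)
      obtain ⟨p, hp⟩ := hdiam b u
      refine ⟨a, .cons hab (p.append P),
        (hab.backAndForth (w s(a, b))).append (.cons hab (p.append Q)), ?_, ?_, ?_⟩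
      · simp only [Walk.edges_append, Walk.edges_cons, List.map_append, List.map_cons,
          List.sum_append, List.sum_cons, Adj.sum_map_edges_backAndForth, sum_insert heS]
        linear_combination hdelay
      · rw [Walk.length_cons, Walk.length_append, card_insert_of_notMem heS]
        nlinarith
      · rw [Walk.length_append, Adj.length_backAndForth, Walk.length_cons, Walk.length_cons,
          Walk.length_append, Walk.length_append, hQ, sum_insert heS]
        ring

end SimpleGraph

theorem frantic_link_measurement_general {V : Type*}
    (G : SimpleGraph V) (D : ℕ)
    (hdiam : ∀ u v : V, ∃ p : G.Walk u v, p.IsPath ∧ p.length ≤ D)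
    (d : Sym2 V → ℝ) (M : ℕ) (w : Sym2 V →₀ ℕ)
    (hsupp : ↑w.support ⊆ G.edgeSet) (hne : w.support.Nonempty)
    (s : ℕ) (hs : w.support.card = s) (hM : ∀ e, w e ≤ M) :
    ∃ (u v : V) (P Q : G.Walk u v),
      (Q.edges.map d).sum - (P.edges.map d).sum
          = 2 * ∑ e ∈ w.support, (w e : ℝ) * d e ∧
      P.length ≤ s * (D + 1) ∧
      Q.length ≤ s * (D + 1) + 2 * M * s := by
  obtain ⟨e, he⟩ := hne
  obtain ⟨u, P, Q, hdelay, hP, hQ⟩ := exists_walks_sum_edges_sub_eq_two_mul_sum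
    (fun u v => (hdiam u v).imp fun _ hp => hp.2) d w w.support hsupp e.out.1
  have hweight : ∑ e ∈ w.support, w e ≤ s * M := by
    simpa [hs] using sum_le_card_nsmul w.support w M fun e _ => hM e
  subst hs
  exact ⟨u, _, P, Q, hdelay, hP, by nlinarith⟩

/-- Any integer-weighted delay measurement with weights at most `M` supported on a
nonempty set of `s` edges of a connected graph of diameter at most `D` can be
realized as half the difference of two end-to-end path delay measurements:
there are walks `P` (spanning measurement) and `Q` (weighted measurement) with the
same endpoints such that `Δ(Q) − Δ(P) = 2·∑_e (w e)·(d e)`, with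
`length(P) ≤ s·(D+1)` and `length(Q) ≤ s·(D+1) + 2·M·s`. -/
theorem frantic_link_measurement {V : Type*} [Fintype V] [DecidableEq V]
    (G : SimpleGraph V) (hconn : G.Connected) (D : ℕ)
    (hdiam : ∀ u v : V, ∃ p : G.Walk u v, p.IsPath ∧ p.length ≤ D)
    (d : Sym2 V → ℝ) (M : ℕ) (w : Sym2 V →₀ ℕ)
    (hsupp : ↑w.support ⊆ G.edgeSet) (hne : w.support.Nonempty)
    (s : ℕ) (hs : w.support.card = s) (hM : ∀ e, w e ≤ M) :
    ∃ (u v : V) (P Q : G.Walk u v),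
      (Q.edges.map d).sum - (P.edges.map d).sum
          = 2 * ∑ e ∈ w.support, (w e : ℝ) * d e ∧
      P.length ≤ s * (D + 1) ∧
      Q.length ≤ s * (D + 1) + 2 * M * s :=
  frantic_link_measurement_general G D hdiam d M w hsupp hne s hs hM
end

section
/- Let G be a simple graph on a vertex type V, let d : V → ℝ assign a delay to each vertex, let P be a walk from u to v in G, and let w : V → ℕ be finitely supported. Suppose every vertex x with w x ≠ 0 appears in the vertex list of P and has a neighbour y in G with d y = 0 (the isolation condition). Then there exists a walk Q from u to v in G such that ∑_{x ∈ support(Q)} d x = ∑_{x ∈ support(P)} d x + ∑_x (w x)·(d x), where the first two sums count vertices with multiplicity along the walks, and the length of Q equals the length of P plus 2·∑_x (w x). -/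
open SimpleGraph

private lemma detour_lemma {V : Type*} (G : SimpleGraph V) (d : V → ℝ)
    {u v x y : V} (P : G.Walk u v) (hx : x ∈ P.support) (hxy : G.Adj x y) :
    ∃ Q : G.Walk u v,
      (Q.support.map d).sum = (P.support.map d).sum + d x + d y ∧
      Q.length = P.length + 2 ∧ ∀ z ∈ P.support, z ∈ Q.support := by
  classical
  refine ⟨(P.takeUntil x hx).append (Walk.cons hxy (Walk.cons hxy.symm (P.dropUntil x hx))),
    ?_, ?_, ?_⟩
  · conv_rhs => rw [← P.take_spec hx]
    rw [Walk.support_append, Walk.support_append]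
    have hr : (P.dropUntil x hx).support = x :: (P.dropUntil x hx).support.tail :=
      Walk.support_eq_cons _
    simp only [Walk.support_cons, List.tail_cons, List.map_append, List.sum_append,
      List.map_cons, List.sum_cons]
    rw [hr]
    simp only [List.tail_cons, List.map_cons, List.sum_cons]
    ring
  · have hlen : (P.takeUntil x hx).length + (P.dropUntil x hx).length = P.length := by
      conv_rhs => rw [← P.take_spec hx]
      rw [Walk.length_append]
    simp only [Walk.length_append, Walk.length_cons]
    omega
  · intro z hz
    rw [← P.take_spec hx] at hz
    rw [Walk.mem_support_append_iff] at hz ⊢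
    rcases hz with h | h
    · exact Or.inl h
    · simp only [Walk.support_cons, List.mem_cons]
      exact Or.inr (Or.inr (Or.inr h))

/-- Node-delay version of the weighted measurement: if every vertex `x` with
`w x ≠ 0` lies on the walk `P` and has a neighbour `y` with `d y = 0` (the
isolation condition), then there is a walk `Q` with the same endpoints whose
end-to-end node delay is `∑_{x ∈ support(P)} d x + ∑_x (w x)·(d x)` and whose
length is `length(P) + 2·∑_x (w x)`. -/
theorem frantic_node_measurement {V : Type*} (G : SimpleGraph V) (d : V → ℝ)
    {u v : V} (P : G.Walk u v) (w : V →₀ ℕ)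
    (hw : ∀ x : V, w x ≠ 0 → x ∈ P.support ∧ ∃ y : V, G.Adj x y ∧ d y = 0) :
    ∃ Q : G.Walk u v,
      (Q.support.map d).sum
          = (P.support.map d).sum + ∑ x ∈ w.support, (w x : ℝ) * d x ∧
      Q.length = P.length + 2 * ∑ x ∈ w.support, w x := by
  classical
  suffices h : ∀ (n : ℕ) (w : V →₀ ℕ) (P : G.Walk u v), (w.sum fun _ k => k) = n →
      (∀ x, w x ≠ 0 → x ∈ P.support ∧ ∃ y, G.Adj x y ∧ d y = 0) →
      ∃ Q : G.Walk u v,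
        (Q.support.map d).sum = (P.support.map d).sum + w.sum (fun x k => (k : ℝ) * d x) ∧
        Q.length = P.length + 2 * w.sum fun _ k => k by
    obtain ⟨Q, h1, h2⟩ := h _ w P rfl hw
    exact ⟨Q, h1, h2⟩
  intro n
  induction n with
  | zero =>
    intro w P h0 _
    have hw0 : w = 0 := by
      ext z
      by_contra hz
      have hzmem : z ∈ w.support := Finsupp.mem_support_iff.mpr (by simpa using hz)
      have : 0 < w.sum fun _ k => k := by
        refine Finset.sum_pos' (fun i _ => Nat.zero_le _) ⟨z, hzmem, ?_⟩
        exact Nat.pos_of_ne_zero (Finsupp.mem_support_iff.mp hzmem)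
      omega
    subst hw0
    exact ⟨P, by simp, by simp⟩
  | succ n ih =>
    intro w P hn hw
    have hwne : w ≠ 0 := by
      rintro rfl
      simp at hn
    obtain ⟨x, hxmem⟩ := Finsupp.support_nonempty_iff.mpr hwne
    have hwx : w x ≠ 0 := Finsupp.mem_support_iff.mp hxmem
    obtain ⟨hxP, y, hxy, hy⟩ := hw x hwx
    set w' : V →₀ ℕ := w - Finsupp.single x 1 with hw'def
    have hle : Finsupp.single x 1 ≤ w := by
      rw [Finsupp.single_le_iff]
      omega
    have hww : w' + Finsupp.single x 1 = w := tsub_add_cancel_of_le hle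
    have hsum : ∀ (M : Type) [inst : AddCommMonoid M] (f : V → ℕ → M),
        (∀ a, f a 0 = 0) → (∀ a b₁ b₂, f a (b₁ + b₂) = f a b₁ + f a b₂) →
        w.sum f = w'.sum f + f x 1 := by
      intro M _ f hf0 hfadd
      rw [← hww, Finsupp.sum_add_index' hf0 hfadd, Finsupp.sum_single_index (hf0 x)]
    have hn' : (w'.sum fun _ k => k) = n := by
      have h2 : (w.sum fun _ k => k) = (w'.sum fun _ k => k) + 1 :=
        hsum ℕ (fun _ k => k) (fun _ => rfl) (fun _ _ _ => rfl)
      omega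
    obtain ⟨P', hs, hl, hsub⟩ := detour_lemma G d P hxP hxy
    obtain ⟨Q, hq1, hq2⟩ := ih w' P' hn' (by
      intro z hz
      have hz' : w z ≠ 0 := by
        intro h0
        have : w' z ≤ w z := by simp [hw'def, Finsupp.tsub_apply]
        omega
      obtain ⟨hzP, hz2⟩ := hw z hz'
      exact ⟨hsub z hzP, hz2⟩)
    refine ⟨Q, ?_, ?_⟩
    · have h3 : (w.sum fun a k => (k : ℝ) * d a)
          = (w'.sum fun a k => (k : ℝ) * d a) + d x := by
        simpa using hsum ℝ (fun a k => (k : ℝ) * d a) (by simp) (by intro a b c; push_cast; ring)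
      rw [hq1, hs, h3, hy]
      ring
    · have h4 : (w.sum fun _ k => k) = (w'.sum fun _ k => k) + 1 :=
        hsum ℕ (fun _ k => k) (fun _ => rfl) (fun _ _ _ => rfl)
      rw [hq2, hl, hn', h4, hn']
      ring
end

section
/- There exist constants c ≥ 1 and C > 0 with the following property. For all n, μ, k ∈ ℕ with k ≥ 1, μ ≥ max(3, c·k), and n ≥ μ, and for every S ⊆ Fin n with |S| ≤ k: under the product probability distribution in which each left vertex j ∈ Fin n independently receives a neighbourhood N(j) drawn uniformly at random from the 3-element subsets of Fin μ, the probability of the event 'for every nonempty S' ⊆ S, the number of right vertices in N(S') that are S'-leaves is at least |N(S')|/2' is at least 1 − C/k. -/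
/-
If `|N(S')| ≥ 2|S'|`, double counting the `3|S'|` edges between `S'` and `N(S')` gives at least
`|N(S')|/2` leaves, since every non-leaf absorbs at least two edges. So if the property fails,
some nonempty `S' ⊆ S` of size `s` has all its neighbours inside a set `T` of `2s - 1` right
vertices. A union bound over `S'` and `T` bounds the failure probability by
`∑ₛ C(k,s) C(μ,2s-1) ((2s-1)/μ)^{3s}`, and `C(n,r) ≤ (en/r)^r` shows that each term is at most
`2^{-s}/μ` once `μ ≥ 16 e³ k`; hence the failure probability is at most `2/μ ≤ 1/k`.
-/

/-- The sample space of the random left-regular bipartite graph: each left vertex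
`j ∈ Fin n` independently receives a neighbourhood drawn uniformly at random from
the 3-element subsets of `Fin μ`.  Since each coordinate is uniform and the
coordinates are independent, the product distribution is the uniform distribution
on this finite product space, so probabilities are ratios of cardinalities. -/
abbrev GraphSample (n μ : ℕ) := Fin n → {t : Finset (Fin μ) // t.card = 3}

/-- `N(S')`: the set of right neighbours of a set `S'` of left vertices. -/
def rightNbrs {n μ : ℕ} (ω : GraphSample n μ) (S' : Finset (Fin n)) :
    Finset (Fin μ) :=
  S'.biUnion fun j => (ω j : Finset (Fin μ))

/-- The set of right vertices in `N(S')` that are `S'`-leaves, i.e. have exactly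
one neighbour in `S'`. -/
def leaves {n μ : ℕ} (ω : GraphSample n μ) (S' : Finset (Fin n)) :
    Finset (Fin μ) :=
  (rightNbrs ω S').filter fun i =>
    (S'.filter fun j => i ∈ (ω j : Finset (Fin μ))).card = 1

open Finset Real

namespace Nat

lemma choose_le_exp_mul_div_pow (n r : ℕ) : (n.choose r : ℝ) ≤ (exp 1 * n / r) ^ r := by
  rcases r.eq_zero_or_pos with rfl | hr
  · simp
  have hr' : (0 : ℝ) < r := by exact_mod_cast hr
  calc (n.choose r : ℝ) ≤ (n : ℝ) ^ r / r ! := choose_le_pow_div r n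
    _ = (n / r : ℝ) ^ r * ((r : ℝ) ^ r / r !) := by rw [div_pow]; field_simp
    _ ≤ (n / r : ℝ) ^ r * exp r := by gcongr; exact pow_div_factorial_le_exp _ hr'.le r
    _ = (exp 1 * n / r) ^ r := by rw [← exp_one_pow, ← mul_pow]; ring

lemma descFactorial_mul_pow_le {m μ : ℕ} (h : m ≤ μ) (r : ℕ) :
    m.descFactorial r * μ ^ r ≤ μ.descFactorial r * m ^ r := by
  induction r with
  | zero => simp
  | succ r ih =>
    have step : (m - r) * μ ≤ (μ - r) * m := by
      rw [Nat.sub_mul, Nat.sub_mul, mul_comm μ m]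
      exact Nat.sub_le_sub_left (Nat.mul_le_mul_left r h) _
    calc m.descFactorial (r + 1) * μ ^ (r + 1)
        = ((m - r) * μ) * (m.descFactorial r * μ ^ r) := by
          rw [descFactorial_succ, pow_succ]; ring
      _ ≤ ((μ - r) * m) * (μ.descFactorial r * m ^ r) := Nat.mul_le_mul step ih
      _ = μ.descFactorial (r + 1) * m ^ (r + 1) := by
          rw [descFactorial_succ, pow_succ]; ring

lemma choose_div_choose_le_div_pow {m μ : ℕ} (h : m ≤ μ) (r : ℕ) :
    (m.choose r : ℝ) / μ.choose r ≤ ((m : ℝ) / μ) ^ r := by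
  rcases (μ.choose r).eq_zero_or_pos with h0 | hpos
  · rw [h0, Nat.cast_zero, div_zero]; positivity
  rcases r.eq_zero_or_pos with rfl | hr
  · simp
  have hμ : (0 : ℝ) < μ := by
    have : μ ≠ 0 := by rintro rfl; simp [Nat.choose_eq_zero_of_lt hr] at hpos
    positivity
  have key : (m.choose r * μ ^ r : ℝ) ≤ μ.choose r * m ^ r := by
    have := descFactorial_mul_pow_le h r
    rw [descFactorial_eq_factorial_mul_choose, descFactorial_eq_factorial_mul_choose,
      mul_assoc, mul_assoc] at this
    exact_mod_cast Nat.le_of_mul_le_mul_left this r.factorial_pos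
  rw [div_pow, div_le_div_iff₀ (by exact_mod_cast hpos) (by positivity)]
  exact key.trans_eq (mul_comm _ _)

end Nat

lemma choose_mul_choose_mul_div_pow_le {k μ s : ℕ} (hs : 1 ≤ s) (hsk : s ≤ k)
    (hμ : 16 * exp 3 * k ≤ μ) :
    (k.choose s : ℝ) * μ.choose (2 * s - 1) * (((2 * s - 1 : ℕ) : ℝ) / μ) ^ (3 * s)
      ≤ (1 / 2) ^ s / μ := by
  set m := 2 * s - 1 with hm
  have hm' : (m : ℝ) = 2 * s - 1 := by rw [hm, Nat.cast_sub (by omega)]; push_cast; ring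
  have hs' : (1 : ℝ) ≤ s := by exact_mod_cast hs
  have hk : (s : ℝ) ≤ k := by exact_mod_cast hsk
  have hμ0 : (0 : ℝ) < μ := by nlinarith [exp_pos 3]
  have hratio : 2 * exp 3 * k / μ ≤ 1 / 8 := by
    rw [div_le_iff₀ hμ0]; linarith
  have hpow : 2 * (s : ℝ) ≤ 4 ^ s := by
    have := one_add_mul_le_pow (a := (3 : ℝ)) (by norm_num) s
    norm_num at this; linarith
  calc (k.choose s : ℝ) * μ.choose m * ((m : ℝ) / μ) ^ (3 * s)
      ≤ (exp 1 * k / s) ^ s * (exp 1 * μ / m) ^ m * ((m : ℝ) / μ) ^ (3 * s) := by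
        gcongr <;> exact Nat.choose_le_exp_mul_div_pow _ _
    _ = (exp 1 * k / s) ^ s * exp 1 ^ m * ((m : ℝ) / μ) ^ (s + 1) := by
        have hcancel : (exp 1 * μ / m) ^ m * ((m : ℝ) / μ) ^ m = exp 1 ^ m := by
          rw [← mul_pow]
          field_simp [show (m : ℝ) ≠ 0 by rw [hm']; linarith]
        rw [show 3 * s = m + (s + 1) by omega, pow_add, ← hcancel]
        ring
    _ ≤ (exp 1 * k / s) ^ s * exp 1 ^ (2 * s) * (2 * s / μ) ^ (s + 1) := by
        gcongr
        · exact one_le_exp zero_le_one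
        · omega
        · rw [hm']; linarith
    _ = (2 * exp 3 * k / μ) ^ s * (2 * s / μ) := by
        rw [show exp 3 = exp 1 ^ 3 by rw [exp_one_pow]; norm_num, pow_succ, pow_mul,
          ← mul_assoc, ← mul_pow, ← mul_pow]
        congr 2
        field_simp
    _ ≤ (1 / 8) ^ s * (2 * s / μ) := by gcongr
    _ = (1 / 2) ^ s * (2 * s / 4 ^ s) / μ := by
        rw [show (1 / 8 : ℝ) = 1 / 2 / 4 by norm_num, div_pow]; ring
    _ ≤ (1 / 2) ^ s * 1 / μ := by
        gcongr
        exact (div_le_one (by positivity)).2 hpow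
    _ = (1 / 2) ^ s / μ := by rw [mul_one]

lemma Fintype.card_filter_forall_mem {ι α : Type*} [Fintype ι] [DecidableEq ι] [Fintype α]
    [DecidableEq α] (s : Finset ι) (A : Finset α) :
    #{f : ι → α | ∀ i ∈ s, f i ∈ A} = #A ^ #s * Fintype.card α ^ (Fintype.card ι - #s) := by
  have hpi : ({f : ι → α | ∀ i ∈ s, f i ∈ A} : Finset (ι → α))
      = Fintype.piFinset fun i => if i ∈ s then A else univ := by
    ext f
    simp only [mem_filter, mem_univ, true_and, Fintype.mem_piFinset]
    exact ⟨fun h i => by split_ifs with hi <;> simp [h i, hi],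
      fun h i hi => by simpa [hi] using h i⟩
  rw [hpi, Fintype.card_piFinset]
  simp only [apply_ite Finset.card, Finset.card_univ]
  rw [prod_ite, prod_const, prod_const, filter_mem_eq_inter, univ_inter,
    filter_notMem_eq_sdiff, card_univ_sdiff]

section GraphSample

variable {n μ : ℕ}

def ManyLeaves (ω : GraphSample n μ) (S : Finset (Fin n)) : Prop :=
  ∀ S' ⊆ S, S'.Nonempty → ((rightNbrs ω S').card : ℝ) / 2 ≤ ((leaves ω S').card : ℝ)

noncomputable instance (S : Finset (Fin n)) : DecidablePred (ManyLeaves (μ := μ) · S) :=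
  fun _ => decidableForallOfDecidableSubsets

lemma sum_card_filter_mem_rightNbrs (ω : GraphSample n μ) (S' : Finset (Fin n)) :
    ∑ i ∈ rightNbrs ω S', #{j ∈ S' | i ∈ (ω j : Finset (Fin μ))} = 3 * #S' := by
  have hdouble := sum_card_bipartiteAbove_eq_sum_card_bipartiteBelow
    (s := rightNbrs ω S') (t := S') (fun i j => i ∈ (ω j : Finset (Fin μ)))
  simp only [bipartiteAbove, bipartiteBelow] at hdouble
  rw [hdouble, mul_comm, ← smul_eq_mul, ← sum_const]
  refine sum_congr rfl fun j hj => ?_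
  have hsub : (ω j : Finset (Fin μ)) ⊆ rightNbrs ω S' :=
    subset_biUnion_of_mem (fun j => (ω j : Finset (Fin μ))) hj
  rw [filter_mem_eq_inter, inter_eq_right.2 hsub, (ω j).2]

lemma two_mul_card_rightNbrs_le (ω : GraphSample n μ) (S' : Finset (Fin n)) :
    2 * #(rightNbrs ω S') ≤ 3 * #S' + #(leaves ω S') := by
  rw [← sum_card_filter_mem_rightNbrs, leaves, card_filter, ← sum_add_distrib, mul_comm,
    ← smul_eq_mul, ← sum_const]
  refine sum_le_sum fun i hi => ?_
  obtain ⟨j, hj, hij⟩ := mem_biUnion.1 hi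
  have : 0 < #{j ∈ S' | i ∈ (ω j : Finset (Fin μ))} := card_pos.2 ⟨j, mem_filter.2 ⟨hj, hij⟩⟩
  split_ifs <;> omega

lemma card_rightNbrs_div_two_le_card_leaves {ω : GraphSample n μ} {S' : Finset (Fin n)}
    (h : 2 * #S' ≤ #(rightNbrs ω S')) :
    (#(rightNbrs ω S') : ℝ) / 2 ≤ #(leaves ω S') := by
  have := two_mul_card_rightNbrs_le ω S'
  rw [div_le_iff₀ two_pos]
  exact_mod_cast (by omega : #(rightNbrs ω S') ≤ #(leaves ω S') * 2)

lemma card_filter_subset_eq_choose (T : Finset (Fin μ)) :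
    #{t : {t : Finset (Fin μ) // #t = 3} | (t : Finset (Fin μ)) ⊆ T} = (#T).choose 3 := by
  rw [← card_powersetCard, ← card_map (Function.Embedding.subtype _)]
  congr 1
  ext t
  simp [mem_powersetCard, and_comm]

lemma card_filter_forall_subset (S' : Finset (Fin n)) (T : Finset (Fin μ)) :
    #{ω : GraphSample n μ | ∀ j ∈ S', (ω j : Finset (Fin μ)) ⊆ T}
      = (#T).choose 3 ^ #S' * μ.choose 3 ^ (n - #S') := by
  have := Fintype.card_filter_forall_mem S'
    {t : {t : Finset (Fin μ) // #t = 3} | (t : Finset (Fin μ)) ⊆ T}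
  simp only [mem_filter, mem_univ, true_and, card_filter_subset_eq_choose, Fintype.card_fin]
    at this
  rwa [Fintype.card_finset_len, Fintype.card_fin] at this

lemma card_filter_card_rightNbrs_le (S' : Finset (Fin n)) {m : ℕ} (hm : m ≤ μ) :
    #{ω : GraphSample n μ | #(rightNbrs ω S') ≤ m}
      ≤ μ.choose m * m.choose 3 ^ #S' * μ.choose 3 ^ (n - #S') := by
  have hcover : ({ω : GraphSample n μ | #(rightNbrs ω S') ≤ m} : Finset _)
      ⊆ (powersetCard m univ).biUnion fun T => {ω | ∀ j ∈ S', (ω j : Finset (Fin μ)) ⊆ T} := by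
    intro ω hω
    obtain ⟨T, hNT, -, hT⟩ := exists_subsuperset_card_eq (subset_univ (rightNbrs ω S'))
      (mem_filter.1 hω).2 (by simpa using hm)
    simp only [mem_biUnion, mem_powersetCard, mem_filter, mem_univ, true_and]
    exact ⟨T, ⟨subset_univ T, hT⟩, fun j hj => (subset_biUnion_of_mem _ hj).trans hNT⟩
  calc _ ≤ _ := card_le_card hcover
    _ ≤ _ := card_biUnion_le
    _ = μ.choose m * m.choose 3 ^ #S' * μ.choose 3 ^ (n - #S') := by
      rw [sum_congr rfl fun T hT => by rw [card_filter_forall_subset, (mem_powersetCard.1 hT).2],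
        sum_const, card_powersetCard, card_univ, Fintype.card_fin, smul_eq_mul, mul_assoc]

lemma card_filter_card_rightNbrs_le_div (S' : Finset (Fin n)) {m : ℕ} (hm : m ≤ μ)
    (hμ : 3 ≤ μ) :
    (#{ω : GraphSample n μ | #(rightNbrs ω S') ≤ m} : ℝ) / μ.choose 3 ^ n
      ≤ μ.choose m * ((m : ℝ) / μ) ^ (3 * #S') := by
  have hpos : (0 : ℝ) < μ.choose 3 := by exact_mod_cast Nat.choose_pos hμ
  have hsplit : (μ.choose 3 : ℝ) ^ n = μ.choose 3 ^ #S' * μ.choose 3 ^ (n - #S') := by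
    rw [← pow_add, Nat.add_sub_cancel' (by simpa using card_le_univ S')]
  calc (#{ω : GraphSample n μ | #(rightNbrs ω S') ≤ m} : ℝ) / μ.choose 3 ^ n
      ≤ (μ.choose m * m.choose 3 ^ #S' * μ.choose 3 ^ (n - #S') : ℕ) / μ.choose 3 ^ n := by
        gcongr; exact card_filter_card_rightNbrs_le S' hm
    _ = μ.choose m * ((m.choose 3 : ℝ) / μ.choose 3) ^ #S' := by
        rw [hsplit, div_pow]; push_cast; field_simp
    _ ≤ μ.choose m * ((m : ℝ) / μ) ^ (3 * #S') := by
        rw [pow_mul]; gcongr; exact Nat.choose_div_choose_le_div_pow hm 3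

lemma card_filter_not_manyLeaves_div_le (S : Finset (Fin n)) (hS : 2 * #S ≤ μ) (hμ : 3 ≤ μ) :
    (#{ω : GraphSample n μ | ¬ ManyLeaves ω S} : ℝ) / μ.choose 3 ^ n
      ≤ ∑ s ∈ Icc 1 #S,
          ((#S).choose s * μ.choose (2 * s - 1) * (((2 * s - 1 : ℕ) : ℝ) / μ) ^ (3 * s)) := by
  have hcover : ({ω : GraphSample n μ | ¬ ManyLeaves ω S} : Finset _)
      ⊆ (Icc 1 #S).biUnion fun s => (S.powersetCard s).biUnion fun S' =>
          {ω | #(rightNbrs ω S') ≤ 2 * s - 1} := by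
    intro ω hω
    obtain ⟨S', hS'S, hne, hfew⟩ : ∃ S' ⊆ S, S'.Nonempty ∧
        (#(leaves ω S') : ℝ) < #(rightNbrs ω S') / 2 := by
      simpa [ManyLeaves] using (mem_filter.1 hω).2
    have hsmall : #(rightNbrs ω S') < 2 * #S' :=
      not_le.1 fun h => hfew.not_ge (card_rightNbrs_div_two_le_card_leaves h)
    simp only [mem_biUnion, mem_Icc, mem_powersetCard, mem_filter, mem_univ, true_and]
    exact ⟨#S', ⟨hne.card_pos, card_le_card hS'S⟩, S', ⟨hS'S, rfl⟩, by omega⟩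
  calc (#{ω : GraphSample n μ | ¬ ManyLeaves ω S} : ℝ) / μ.choose 3 ^ n
      ≤ (∑ s ∈ Icc 1 #S, ∑ S' ∈ S.powersetCard s,
          #{ω : GraphSample n μ | #(rightNbrs ω S') ≤ 2 * s - 1} : ℕ) / μ.choose 3 ^ n := by
        gcongr
        exact (card_le_card hcover).trans <| card_biUnion_le.trans <|
          sum_le_sum fun s _ => card_biUnion_le
    _ = ∑ s ∈ Icc 1 #S, ∑ S' ∈ S.powersetCard s,
          (#{ω : GraphSample n μ | #(rightNbrs ω S') ≤ 2 * s - 1} : ℝ) / μ.choose 3 ^ n := by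
        push_cast; simp only [sum_div]
    _ ≤ ∑ s ∈ Icc 1 #S, ∑ S' ∈ S.powersetCard s,
          (μ.choose (2 * s - 1) * (((2 * s - 1 : ℕ) : ℝ) / μ) ^ (3 * s)) := by
        gcongr with s hs S' hS'
        have hs : s ≤ #S := (mem_Icc.1 hs).2
        rw [← (mem_powersetCard.1 hS').2] at hs ⊢
        exact card_filter_card_rightNbrs_le_div S' (by omega) hμ
    _ = _ := by simp only [sum_const, card_powersetCard, nsmul_eq_mul, mul_assoc]

lemma card_filter_not_manyLeaves_div_le_two_div (S : Finset (Fin n))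
    (hS : 16 * exp 3 * #S ≤ μ) (hμ : 3 ≤ μ) :
    (#{ω : GraphSample n μ | ¬ ManyLeaves ω S} : ℝ) / μ.choose 3 ^ n ≤ 2 / μ := by
  have h2S : 2 * #S ≤ μ := by
    have : (2 * #S : ℝ) ≤ μ := by nlinarith [add_one_le_exp 3]
    exact_mod_cast this
  calc _ ≤ _ := card_filter_not_manyLeaves_div_le S h2S hμ
    _ ≤ ∑ s ∈ Icc 1 #S, (1 / 2 : ℝ) ^ s / μ := by
        gcongr with s hs
        exact choose_mul_choose_mul_div_pow_le (mem_Icc.1 hs).1 (mem_Icc.1 hs).2 hS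
    _ ≤ ∑ s ∈ range (#S + 1), (1 / 2 : ℝ) ^ s / μ := by
        refine sum_le_sum_of_subset_of_nonneg (fun s hs => ?_) fun _ _ _ => by positivity
        simp only [mem_Icc, mem_range] at hs ⊢; omega
    _ ≤ 2 / μ := by rw [← sum_div]; gcongr; exact sum_geometric_two_le _

lemma card_graphSample : Nat.card (GraphSample n μ) = μ.choose 3 ^ n := by
  rw [Nat.card_eq_fintype_card, Fintype.card_pi, prod_const, Fintype.card_finset_len,
    Fintype.card_fin, card_univ, Fintype.card_fin]

lemma card_manyLeaves_div_card_eq (S : Finset (Fin n)) (hμ : 3 ≤ μ) :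
    (Nat.card {ω : GraphSample n μ // ManyLeaves ω S} : ℝ) / Nat.card (GraphSample n μ)
      = 1 - #{ω : GraphSample n μ | ¬ ManyLeaves ω S} / μ.choose 3 ^ n := by
  have hsplit := card_filter_add_card_filter_not (s := (univ : Finset (GraphSample n μ)))
    (ManyLeaves · S)
  rw [card_univ, ← Nat.card_eq_fintype_card, card_graphSample] at hsplit
  have hgood : (#{ω : GraphSample n μ | ManyLeaves ω S} : ℝ)
      = μ.choose 3 ^ n - #{ω : GraphSample n μ | ¬ ManyLeaves ω S} := by
    rw [← Nat.cast_pow, ← hsplit]; push_cast; ring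
  rw [Nat.card_eq_fintype_card, Fintype.card_subtype, card_graphSample, Nat.cast_pow, hgood,
    sub_div, div_self (by have := Nat.choose_pos hμ; positivity)]

end GraphSample

/-- "Many leaf nodes": there are constants `c ≥ 1` and `C > 0` such that whenever
`k ≥ 1`, `μ ≥ max(3, c·k)`, `n ≥ μ`, and `|S| ≤ k`, with probability at least
`1 − C/k` (under the uniform product distribution on neighbourhood assignments)
every nonempty `S' ⊆ S` has at least `|N(S')|/2` `S'`-leaf nodes in `N(S')`. -/
theorem many_leaf_nodes :
    ∃ c : ℝ, 1 ≤ c ∧ ∃ C : ℝ, 0 < C ∧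
      ∀ n μ k : ℕ, 1 ≤ k → (3 : ℝ) ≤ (μ : ℝ) → c * (k : ℝ) ≤ (μ : ℝ) → μ ≤ n →
        ∀ S : Finset (Fin n), S.card ≤ k →
          (1 : ℝ) - C / (k : ℝ) ≤
            (Nat.card {ω : GraphSample n μ //
                ∀ S' ⊆ S, S'.Nonempty →
                  ((rightNbrs ω S').card : ℝ) / 2 ≤ ((leaves ω S').card : ℝ)} : ℝ)
              / (Nat.card (GraphSample n μ) : ℝ) := by
  have he : 1 ≤ exp 3 := one_le_exp (by norm_num)
  refine ⟨16 * exp 3, by linarith, 1, one_pos, ?_⟩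
  intro n μ k hk hμ3 hμk _ S hSk
  have hμ : 3 ≤ μ := by exact_mod_cast hμ3
  have hk : (1 : ℝ) ≤ k := by exact_mod_cast hk
  have hSk : (#S : ℝ) ≤ k := by exact_mod_cast hSk
  have hfail := card_filter_not_manyLeaves_div_le_two_div S (by nlinarith) hμ
  have hμk' : 2 / (μ : ℝ) ≤ 1 / k := by
    rw [div_le_div_iff₀ (by linarith) (by linarith)]; nlinarith
  change _ ≤ (Nat.card {ω : GraphSample n μ // ManyLeaves ω S} : ℝ) / _
  rw [card_manyLeaves_div_card_eq S hμ]
  linarith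
end
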